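/- arXiv:2107.08864 — 9 statements merged into one kernel-verified Lean document; each statement's English description precedes it below -/
import Mathlib

section
/- For even d, the hyperdeterminant is the unique function Δ : T^d(n) → F that is multilinear in each slice, skew-symmetric under swapping any two parallel slices, and satisfies Δ(I) = 1 for the diagonal identity tensor I. -/
/-!
Expanding `Δ T` multilinearly along the slices in direction `0` writes it as a sum over choices of
one entry `g ℓ` of `T` in each slice `ℓ`, weighted by `Δ` of the tensor whose only nonzero entries
are these, equal to `1`. That tensor has a zero slice unless, in every direction `k`, the chosen
entries meet each slice exactly once, i.e. `g ℓ = (σ_k ℓ)_k` for permutations `σ_k` with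
`σ_0 = 1`. It is then `diagT` with its `k`-slices permuted by `σ_k⁻¹`, and skew-symmetry evaluates
`Δ` on it to `∏ sign σ_k`: this is Cayley's formula term by term.
-/

open Finset

variable {F : Type*}

section Defs
variable [CommRing F] {d n : ℕ}

/-- Cayley's first hyperdeterminant. -/
def hdet [NeZero d] (T : (Fin d → Fin n) → F) : F :=
  ∑ σ : Fin d → Equiv.Perm (Fin n),
    if σ 0 = 1 then
      ((((∏ ℓ, Equiv.Perm.sign (σ ℓ)) : ℤˣ) : ℤ) : F) * ∏ i, T (fun ℓ => σ ℓ i)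
    else 0

/-- The diagonal identity tensor. -/
def diagT [NeZero d] : (Fin d → Fin n) → F :=
  fun i => if ∀ ℓ, i ℓ = i 0 then 1 else 0

/-- The set of natural numbers `r` such that `T` decomposes as a sum of `r`
tensors from `S`. -/
def Decomps (S : Set ((Fin d → Fin n) → F)) (T : (Fin d → Fin n) → F) : Set ℕ :=
  {r | ∃ c : Fin r → ((Fin d → Fin n) → F), (∀ ℓ, c ℓ ∈ S) ∧ ∑ ℓ, c ℓ = T}

/-- The rank function associated to a set `S` of simple tensors. -/
noncomputable def rankS (S : Set ((Fin d → Fin n) → F)) (T : (Fin d → Fin n) → F) : ℕ :=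
  sInf (Decomps S T)

/-- `T` depends only on the coordinates in `A`. -/
def DependsOnlyOn (A : Set (Fin d)) (T : (Fin d → Fin n) → F) : Prop :=
  ∀ i j : Fin d → Fin n, (∀ ℓ ∈ A, i ℓ = j ℓ) → T i = T j

/-- Simple tensors for the tensor rank: fully decomposable tensors. -/
def tensorSimple : Set ((Fin d → Fin n) → F) :=
  {T | ∃ v : Fin d → (Fin n → F), (∀ ℓ, v ℓ ≠ 0) ∧ T = fun i => ∏ ℓ, v ℓ (i ℓ)}

/-- Simple tensors for the slice rank: decomposable along some coordinate. -/
def sliceSimple : Set ((Fin d → Fin n) → F) :=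
  {T | ∃ (k : Fin d) (v : Fin n → F) (T₁ : (Fin d → Fin n) → F),
    v ≠ 0 ∧ DependsOnlyOn {k}ᶜ T₁ ∧ T = fun i => v (i k) * T₁ i}

/-- Simple tensors for the partition rank: decomposable with respect to a
set partition of the coordinates into two nonempty blocks. -/
def partitionSimple : Set ((Fin d → Fin n) → F) :=
  {T | ∃ (A : Set (Fin d)) (T₁ T₂ : (Fin d → Fin n) → F),
    A.Nonempty ∧ Aᶜ.Nonempty ∧ T₁ ≠ 0 ∧ T₂ ≠ 0 ∧
    DependsOnlyOn A T₁ ∧ DependsOnlyOn Aᶜ T₂ ∧ T = fun i => T₁ i * T₂ i}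

/-- Simple tensors for the odd partition rank: decomposable with respect to a
set partition of the coordinates with one block `B` of odd size not containing
the first coordinate. -/
def oddPartitionSimple [NeZero d] : Set ((Fin d → Fin n) → F) :=
  {T | ∃ (B : Finset (Fin d)) (T₁ T₂ : (Fin d → Fin n) → F),
    Odd B.card ∧ (0 : Fin d) ∉ B ∧ T₁ ≠ 0 ∧ T₂ ≠ 0 ∧
    DependsOnlyOn (↑Bᶜ) T₁ ∧ DependsOnlyOn (↑B) T₂ ∧ T = fun i => T₁ i * T₂ i}

/-- The multilinear product `(A_1, …, A_d) ⬝ T`, expressing a change of basis. -/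
def mprod (A : Fin d → Matrix (Fin n) (Fin n) F) (T : (Fin d → Fin n) → F) :
    (Fin d → Fin n) → F :=
  fun i => ∑ j : Fin d → Fin n, (∏ ℓ, A ℓ (i ℓ) (j ℓ)) * T j

/-- The subtensor of `T` given by index maps `e`. -/
def subT {m : ℕ} (T : (Fin d → Fin n) → F) (e : Fin d → (Fin m → Fin n)) :
    (Fin d → Fin m) → F :=
  fun j => T fun ℓ => e ℓ (j ℓ)

/-- `T` is `k`-null: all `k × ⋯ × k` hyperdeterminant minors of `T` vanish. -/
def kNull [NeZero d] (k : ℕ) (T : (Fin d → Fin n) → F) : Prop :=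
  ∀ e : Fin d → (Fin k → Fin n), (∀ ℓ, StrictMono (e ℓ)) → hdet (subT T e) = 0

end Defs

open Equiv

section SliceAxioms

variable [CommRing F] {d n : ℕ}

def SliceAdditive (Δ : ((Fin d → Fin n) → F) → F) : Prop :=
  ∀ (k : Fin d) (ℓ : Fin n) (T T' T'' : (Fin d → Fin n) → F),
    (∀ i, i k ≠ ℓ → T' i = T i) → (∀ i, i k ≠ ℓ → T'' i = T i) →
    (∀ i, i k = ℓ → T'' i = T i + T' i) → Δ T'' = Δ T + Δ T'

def SliceHomogeneous (Δ : ((Fin d → Fin n) → F) → F) : Prop :=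
  ∀ (k : Fin d) (ℓ : Fin n) (c : F) (T T' : (Fin d → Fin n) → F),
    (∀ i, i k ≠ ℓ → T' i = T i) → (∀ i, i k = ℓ → T' i = c * T i) → Δ T' = c * Δ T

def SliceAntisymmetric (Δ : ((Fin d → Fin n) → F) → F) : Prop :=
  ∀ (k : Fin d) (a b : Fin n), a ≠ b → ∀ T : (Fin d → Fin n) → F,
    Δ (fun i => T (Function.update i k (swap a b (i k)))) = - Δ T

variable {Δ : ((Fin d → Fin n) → F) → F}

theorem SliceHomogeneous.eq_zero_of_slice_eq_zero (hsmul : SliceHomogeneous Δ)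
    {k : Fin d} {ℓ : Fin n} {T : (Fin d → Fin n) → F} (h : ∀ i, i k = ℓ → T i = 0) :
    Δ T = 0 := by
  rw [hsmul k ℓ 0 T T (fun _ _ => rfl) (fun i hi => by rw [h i hi, zero_mul]), zero_mul]

theorem SliceAntisymmetric.apply_perm_slice (hswap : SliceAntisymmetric Δ) (k : Fin d)
    (τ : Perm (Fin n)) (T : (Fin d → Fin n) → F) :
    Δ (fun i => T (Function.update i k (τ (i k)))) = (Perm.sign τ : ℤ) * Δ T := by
  induction τ using Perm.swap_induction_on' generalizing T with
  | one => simp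
  | mul_swap τ a b hab ih =>
    have h := hswap k a b hab (fun i => T (Function.update i k (τ (i k))))
    simp only [Function.update_self, Function.update_idem] at h
    simp only [Perm.mul_apply]
    rw [h, ih, Perm.sign_mul, Perm.sign_swap hab]
    push_cast
    ring

theorem SliceAntisymmetric.apply_perm_slices (hswap : SliceAntisymmetric Δ)
    (τ : Fin d → Perm (Fin n)) (T : (Fin d → Fin n) → F) :
    Δ (fun i => T (fun k => τ k (i k))) = ((∏ k, Perm.sign (τ k) : ℤˣ) : ℤ) * Δ T := by
  classical
  suffices h : ∀ s : Finset (Fin d), ∀ T : (Fin d → Fin n) → F,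
      Δ (fun i => T (fun k => if k ∈ s then τ k (i k) else i k))
        = ((∏ k ∈ s, Perm.sign (τ k) : ℤˣ) : ℤ) * Δ T by
    simpa using h Finset.univ T
  intro s
  induction s using Finset.induction_on with
  | empty => simp
  | insert a s ha ih =>
    intro T
    have hstep := hswap.apply_perm_slice a (τ a)
      (fun j => T (fun k => if k ∈ s then τ k (j k) else j k))
    have hpoint : ∀ (i : Fin d → Fin n) (k : Fin d),
        (if k ∈ s then τ k (Function.update i a (τ a (i a)) k)
          else Function.update i a (τ a (i a)) k)
          = if k ∈ insert a s then τ k (i k) else i k := by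
      intro i k
      by_cases hk : k = a
      · subst hk; simp [ha]
      · simp [hk]
    simp only [hpoint] at hstep
    rw [hstep, ih, Finset.prod_insert ha]
    push_cast
    ring

def sliceMultilinearMap (hadd : SliceAdditive Δ) (hsmul : SliceHomogeneous Δ) (k : Fin d) :
    MultilinearMap F (fun _ : Fin n => (Fin d → Fin n) → F) F where
  toFun M := Δ (fun i => M (i k) i)
  map_update_add' M ℓ S S' := by
    refine hadd k ℓ _ _ _ ?_ ?_ ?_ <;> intro i hi <;> simp [hi]
  map_update_smul' M ℓ c S := by
    refine hsmul k ℓ c _ _ ?_ ?_ <;> intro i hi <;> simp [hi]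

/-- The `ℓ`-th slice in direction `k` has a single nonzero entry, at `g ℓ`, when `g ℓ k = ℓ`,
and vanishes otherwise. -/
def sliceBasis (k : Fin d) (g : Fin n → Fin d → Fin n) : (Fin d → Fin n) → F :=
  fun i => if g (i k) = i then 1 else 0

theorem apply_eq_sum_sliceBasis (hadd : SliceAdditive Δ) (hsmul : SliceHomogeneous Δ)
    (k : Fin d) (T : (Fin d → Fin n) → F) :
    Δ T = ∑ g : Fin n → Fin d → Fin n, (∏ ℓ, T (g ℓ)) * Δ (sliceBasis k g) := by
  classical
  let D := sliceMultilinearMap hadd hsmul k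
  calc Δ T = D (fun _ => T) := rfl
    _ = D (fun _ => ∑ j, T j • fun i => if j = i then (1 : F) else 0) := by
      rw [← pi_eq_sum_univ T]
    _ = _ := by
      rw [D.map_sum]
      refine Finset.sum_congr rfl fun g _ => ?_
      rw [D.map_smul_univ, smul_eq_mul]
      rfl

theorem SliceHomogeneous.exists_perm_of_apply_sliceBasis_ne_zero [NeZero d]
    (hsmul : SliceHomogeneous Δ) {g : Fin n → Fin d → Fin n} (h : Δ (sliceBasis 0 g) ≠ 0) :
    ∃ σ : Fin d → Perm (Fin n), σ 0 = 1 ∧ (fun ℓ k => σ k ℓ) = g := by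
  have hfix : ∀ m, g m 0 = m := by
    intro m
    by_contra hm
    refine h (hsmul.eq_zero_of_slice_eq_zero (k := 0) (ℓ := m) fun i hi => if_neg ?_)
    intro hgi
    subst hi
    exact hm (congrFun hgi 0)
  have hbij : ∀ k, Function.Bijective (fun ℓ => g ℓ k) := by
    intro k
    rw [← Finite.surjective_iff_bijective]
    intro m
    by_contra! hm
    exact h (hsmul.eq_zero_of_slice_eq_zero (k := k) (ℓ := m) fun i hi =>
      if_neg fun hgi => hm (i 0) (by rw [hgi, hi]))
  exact ⟨fun k => ofBijective _ (hbij k), Perm.ext hfix, rfl⟩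

theorem SliceAntisymmetric.apply_sliceBasis_perm [NeZero d] (hswap : SliceAntisymmetric Δ)
    (hnorm : Δ diagT = 1) {σ : Fin d → Perm (Fin n)} (hσ : σ 0 = 1) :
    Δ (sliceBasis 0 fun ℓ k => σ k ℓ) = ((∏ k, Perm.sign (σ k) : ℤˣ) : ℤ) := by
  have hdiag : sliceBasis 0 (fun ℓ k => σ k ℓ) =
      fun i => diagT (F := F) (fun k => (σ k)⁻¹ (i k)) := by
    funext i
    refine if_congr ?_ rfl rfl
    simp only [funext_iff, hσ, inv_one, Perm.one_apply, Perm.inv_eq_iff_eq]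
    exact forall_congr' fun _ => eq_comm
  rw [hdiag, hswap.apply_perm_slices, hnorm, mul_one]
  simp [Perm.sign_inv]

end SliceAxioms

theorem hdet_unique_general [Field F] {d n : ℕ} [NeZero d]
    (Δ : ((Fin d → Fin n) → F) → F)
    (hadd : ∀ (k : Fin d) (ℓ : Fin n) (T T' T'' : (Fin d → Fin n) → F),
      (∀ i, i k ≠ ℓ → T' i = T i) → (∀ i, i k ≠ ℓ → T'' i = T i) →
      (∀ i, i k = ℓ → T'' i = T i + T' i) → Δ T'' = Δ T + Δ T')
    (hsmul : ∀ (k : Fin d) (ℓ : Fin n) (c : F) (T T' : (Fin d → Fin n) → F),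
      (∀ i, i k ≠ ℓ → T' i = T i) → (∀ i, i k = ℓ → T' i = c * T i) →
      Δ T' = c * Δ T)
    (hswap : ∀ (k : Fin d) (a b : Fin n), a ≠ b → ∀ T : (Fin d → Fin n) → F,
      Δ (fun i => T (Function.update i k (Equiv.swap a b (i k)))) = - Δ T)
    (hnorm : Δ diagT = 1) :
    ∀ T : (Fin d → Fin n) → F, Δ T = hdet T := by
  intro T
  rw [apply_eq_sum_sliceBasis hadd hsmul 0 T, hdet, ← Finset.sum_filter]
  symm
  refine Finset.sum_of_injOn (fun σ ℓ k => σ k ℓ) ?_ (fun _ _ => Finset.mem_coe.2 (mem_univ _))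
    ?_ ?_
  · intro σ _ τ _ h
    exact funext fun k => Perm.ext fun ℓ => congrFun (congrFun h ℓ) k
  · intro g _ hg
    refine mul_eq_zero_of_right _ (by_contra fun hne => ?_)
    obtain ⟨σ, hσ, rfl⟩ := SliceHomogeneous.exists_perm_of_apply_sliceBasis_ne_zero hsmul hne
    exact hg ⟨σ, by simpa using hσ, rfl⟩
  · intro σ hσ
    rw [SliceAntisymmetric.apply_sliceBasis_perm hswap hnorm (mem_filter.1 hσ).2, mul_comm]

/-- For even `d`, the hyperdeterminant is the unique function on
`d`-tensors that is multilinear in each slice, skew-symmetric under swapping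
parallel slices, and normalized on the diagonal identity tensor. -/
theorem hdet_unique [Field F] {d n : ℕ} [NeZero d] (hd : Even d)
    (Δ : ((Fin d → Fin n) → F) → F)
    (hadd : ∀ (k : Fin d) (ℓ : Fin n) (T T' T'' : (Fin d → Fin n) → F),
      (∀ i, i k ≠ ℓ → T' i = T i) → (∀ i, i k ≠ ℓ → T'' i = T i) →
      (∀ i, i k = ℓ → T'' i = T i + T' i) → Δ T'' = Δ T + Δ T')
    (hsmul : ∀ (k : Fin d) (ℓ : Fin n) (c : F) (T T' : (Fin d → Fin n) → F),
      (∀ i, i k ≠ ℓ → T' i = T i) → (∀ i, i k = ℓ → T' i = c * T i) →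
      Δ T' = c * Δ T)
    (hswap : ∀ (k : Fin d) (a b : Fin n), a ≠ b → ∀ T : (Fin d → Fin n) → F,
      Δ (fun i => T (Function.update i k (Equiv.swap a b (i k)))) = - Δ T)
    (hnorm : Δ diagT = 1) :
    ∀ T : (Fin d → Fin n) → F, Δ T = hdet T :=
  hdet_unique_general Δ hadd hsmul hswap hnorm
end

section
/- For odd d, there is no function Δ : T^d(n) → F (with n ≥ 2 and char F ≠ 2) that is skew-symmetric under swapping any two parallel slices in each direction and satisfies Δ(I) = 1 for the diagonal identity tensor I. -/
open Finset

variable {F : Type*}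

/-!
Swapping the slices `a` and `b` in every one of the `d` directions at once changes a skew-symmetric
`Δ` by the sign `(-1) ^ d = -1`, but maps the diagonal tensor to itself, since relabelling all
coordinates by the same permutation preserves the diagonal. Hence `1 = Δ I = -Δ I = -1`, which is
impossible when `2 ≠ 0`.
-/

theorem apply_swap_slices_eq_neg_one_pow_mul {ι α R : Type*} [DecidableEq ι] [DecidableEq α]
    [Ring R] {Δ : ((ι → α) → R) → R} {a b : α}
    (hΔ : ∀ (k : ι) (T : (ι → α) → R),
      Δ (fun i => T (Function.update i k (Equiv.swap a b (i k)))) = -Δ T)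
    (s : Finset ι) (T : (ι → α) → R) :
    Δ (fun i => T (fun ℓ => if ℓ ∈ s then Equiv.swap a b (i ℓ) else i ℓ)) = (-1) ^ #s * Δ T := by
  induction s using Finset.induction_on with
  | empty => simp
  | insert k s hk ih =>
    set T' := fun i : ι → α => T (fun ℓ => if ℓ ∈ s then Equiv.swap a b (i ℓ) else i ℓ)
    have hslices : (fun i => T (fun ℓ => if ℓ ∈ insert k s then Equiv.swap a b (i ℓ) else i ℓ)) =
        fun i => T' (Function.update i k (Equiv.swap a b (i k))) := by
      funext i
      congr 1
      funext ℓ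
      by_cases hℓ : ℓ = k
      · subst hℓ
        simp [hk]
      · simp [hℓ]
    rw [hslices, hΔ, ih, card_insert_of_notMem hk, pow_succ]
    noncomm_ring

theorem apply_swap_all_slices_eq_neg_one_pow_mul {ι α R : Type*} [Fintype ι] [DecidableEq ι]
    [DecidableEq α] [Ring R] {Δ : ((ι → α) → R) → R} {a b : α}
    (hΔ : ∀ (k : ι) (T : (ι → α) → R),
      Δ (fun i => T (Function.update i k (Equiv.swap a b (i k)))) = -Δ T)
    (T : (ι → α) → R) :
    Δ (fun i => T (fun ℓ => Equiv.swap a b (i ℓ))) = (-1) ^ Fintype.card ι * Δ T := by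
  simpa using apply_swap_slices_eq_neg_one_pow_mul hΔ univ T

theorem diagT_comp_of_injective [CommRing F] {d n : ℕ} [NeZero d] {f : Fin n → Fin n}
    (hf : Function.Injective f) :
    (fun i => diagT (fun ℓ => f (i ℓ))) = (diagT : (Fin d → Fin n) → F) := by
  funext i
  simp only [diagT, hf.eq_iff]

/-- For odd `d` (with `n ≥ 2` and characteristic of `F` not `2`),
no function on `d`-tensors is skew-symmetric under swapping parallel slices in
every direction and equal to `1` on the diagonal identity tensor. -/
theorem no_skew_symmetric_normalized_of_odd [Field F] {d n : ℕ} [NeZero d]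
    (hd : Odd d) (hn : 2 ≤ n) (hF : (2 : F) ≠ 0) :
    ¬ ∃ Δ : ((Fin d → Fin n) → F) → F,
      (∀ (k : Fin d) (a b : Fin n), a ≠ b → ∀ T : (Fin d → Fin n) → F,
        Δ (fun i => T (Function.update i k (Equiv.swap a b (i k)))) = - Δ T) ∧
      Δ diagT = 1 := by
  rintro ⟨Δ, hskew, hdiag⟩
  have : Nontrivial (Fin n) := Fin.nontrivial_iff_two_le.mpr hn
  obtain ⟨a, b, hab⟩ := exists_pair_ne (Fin n)
  have hsign := apply_swap_all_slices_eq_neg_one_pow_mul (fun k => hskew k a b hab) diagT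
  rw [diagT_comp_of_injective (Equiv.injective _), hdiag, Fintype.card_fin, hd.neg_one_pow,
    mul_one] at hsign
  exact hF (by linear_combination hsign)
end

section
/- Cayley's invariance formula: for even d, T ∈ T^d(n), and n×n matrices A_1,...,A_d, det((A_1,...,A_d)·T) = det(A_1)···det(A_d)·det(T). In particular, the hyperdeterminant is SL(n)^d invariant. -/
open Finset

variable {F : Type*}

/-! Acting on the single slot `k` by a matrix `B` multiplies by `B` every slice matrix
`x, i ↦ T (τ 0 i, …, x, …, τ (d-1) i)` with `x` in slot `k`, and for fixed permutations `τ`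
in the other slots, the part of the hyperdeterminant sum running over the permutation in
slot `k` is the determinant of that slice. The normalisation `σ 0 = 1` in `hdet` is in the way
when `k = 0`, but for even `d` each summand is invariant under `σ ℓ ↦ σ ℓ * ρ` (the sign
changes by `sign ρ ^ d = 1`), so any other slot can be normalised instead. A general tuple
`(A_1, …, A_d)` is the product of its single-slot factors. -/

open Function

theorem Fintype.sum_eq_sum_filter_sum_update {ι α M : Type*} [Fintype ι] [DecidableEq ι]
    [Fintype α] [DecidableEq α] [AddCommMonoid M] (k : ι) (a : α) (f : (ι → α) → M) :
    ∑ σ, f σ = ∑ τ with τ k = a, ∑ x, f (update τ k x) := by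
  rw [← Finset.sum_product']
  refine Finset.sum_nbij' (fun σ => (update σ k a, σ k)) (fun p => update p.1 k p.2)
    ?_ ?_ ?_ ?_ ?_ <;> simp
  intro τ x h
  simp [← h]

section Mprod
variable [CommRing F] {d n : ℕ}

theorem mprod_one (T : (Fin d → Fin n) → F) : mprod 1 T = T := by
  funext i
  rw [mprod, Finset.sum_eq_single i]
  · simp
  · intro j _ hj
    obtain ⟨ℓ, hℓ⟩ := Function.ne_iff.mp hj
    rw [Finset.prod_eq_zero (Finset.mem_univ ℓ) (by simp [Ne.symm hℓ]), zero_mul]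
  · simp

theorem mprod_mul (A B : Fin d → Matrix (Fin n) (Fin n) F) (T : (Fin d → Fin n) → F) :
    mprod A (mprod B T) = mprod (A * B) T := by
  funext i
  simp_rw [mprod, Pi.mul_apply, Matrix.mul_apply, Fintype.prod_sum, Finset.sum_mul,
    Finset.mul_sum, Finset.prod_mul_distrib, mul_assoc]
  rw [Finset.sum_comm]

theorem mprod_update_one_apply (k : Fin d) (B : Matrix (Fin n) (Fin n) F)
    (T : (Fin d → Fin n) → F) (i : Fin d → Fin n) :
    mprod (update 1 k B) T i = ∑ x, B (i k) x * T (update i k x) := by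
  rw [mprod, Fintype.sum_eq_sum_filter_sum_update k (i k), Finset.sum_eq_single i]
  · refine Finset.sum_congr rfl fun x _ => ?_
    rw [Fintype.prod_eq_single k fun ℓ hℓ => by simp [hℓ]]
    simp
  · intro τ hτ hτi
    obtain ⟨ℓ, hℓ⟩ := Function.ne_iff.mp hτi
    have hℓk : ℓ ≠ k := fun h => hℓ (h ▸ (Finset.mem_filter.mp hτ).2)
    refine Finset.sum_eq_zero fun x _ => ?_
    rw [Finset.prod_eq_zero (Finset.mem_univ ℓ) (by simp [hℓk, Matrix.one_apply_ne' hℓ]),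
      zero_mul]
  · simp

end Mprod

section Hdet
variable [CommRing F] {d n : ℕ}

def hdetTerm (T : (Fin d → Fin n) → F) (σ : Fin d → Equiv.Perm (Fin n)) : F :=
  ((((∏ ℓ, Equiv.Perm.sign (σ ℓ)) : ℤˣ) : ℤ) : F) * ∏ i, T (fun ℓ => σ ℓ i)

theorem hdet_eq_sum_hdetTerm [NeZero d] (T : (Fin d → Fin n) → F) :
    hdet T = ∑ σ with σ 0 = 1, hdetTerm T σ := by
  rw [Finset.sum_filter]
  rfl

theorem hdetTerm_mul_right (hd : Even d) (T : (Fin d → Fin n) → F)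
    (σ : Fin d → Equiv.Perm (Fin n)) (ρ : Equiv.Perm (Fin n)) :
    hdetTerm T (fun ℓ => σ ℓ * ρ) = hdetTerm T σ := by
  have hsign : ∏ ℓ, Equiv.Perm.sign (σ ℓ * ρ) = ∏ ℓ, Equiv.Perm.sign (σ ℓ) := by
    simp only [map_mul, Finset.prod_mul_distrib, Finset.prod_const, Finset.card_univ,
      Fintype.card_fin, Int.units_pow_eq_pow_mod_two, Nat.even_iff.mp hd, pow_zero, mul_one]
  rw [hdetTerm, hdetTerm, hsign]
  congr 1
  exact Equiv.prod_comp ρ fun i => T fun ℓ => σ ℓ i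

theorem hdet_eq_sum_filter_apply_eq_one [NeZero d] (hd : Even d) (m : Fin d)
    (T : (Fin d → Fin n) → F) :
    hdet T = ∑ σ with σ m = 1, hdetTerm T σ := by
  rw [hdet_eq_sum_hdetTerm]
  refine Finset.sum_nbij' (fun σ ℓ => σ ℓ * (σ m)⁻¹) (fun σ ℓ => σ ℓ * (σ 0)⁻¹)
    ?_ ?_ ?_ ?_ fun σ _ => (hdetTerm_mul_right hd T σ _).symm <;>
    intro σ hσ <;> simp_all [mul_assoc]

def sliceMatrix (T : (Fin d → Fin n) → F) (k : Fin d) (τ : Fin d → Equiv.Perm (Fin n)) :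
    Matrix (Fin n) (Fin n) F :=
  Matrix.of fun x i => T (update (fun ℓ => τ ℓ i) k x)

theorem sum_hdetTerm_update (T : (Fin d → Fin n) → F) {k : Fin d}
    {τ : Fin d → Equiv.Perm (Fin n)} (hτ : τ k = 1) :
    ∑ π, hdetTerm T (update τ k π)
      = ((((∏ ℓ, Equiv.Perm.sign (τ ℓ)) : ℤˣ) : ℤ) : F) * (sliceMatrix T k τ).det := by
  rw [Matrix.det_apply', Finset.mul_sum]
  refine Finset.sum_congr rfl fun π _ => ?_
  have hsign : ∏ ℓ, Equiv.Perm.sign (update τ k π ℓ)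
      = Equiv.Perm.sign π * ∏ ℓ, Equiv.Perm.sign (τ ℓ) := by
    rw [Fintype.prod_eq_mul_prod_compl k, Fintype.prod_eq_mul_prod_compl k, update_self, hτ,
      map_one, one_mul]
    congr 1
    exact Finset.prod_congr rfl fun ℓ hℓ => by rw [update_of_ne (by simpa using hℓ)]
  have hentry : ∀ i, (fun ℓ => update τ k π ℓ i) = update (fun ℓ => τ ℓ i) k (π i) :=
    fun i => funext (apply_update (fun _ σ => σ i) τ k π)
  simp only [hdetTerm, hsign, hentry, sliceMatrix, Matrix.of_apply]
  push_cast
  ring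

theorem sliceMatrix_mprod_update_one (T : (Fin d → Fin n) → F) (k : Fin d)
    (B : Matrix (Fin n) (Fin n) F) (τ : Fin d → Equiv.Perm (Fin n)) :
    sliceMatrix (mprod (update 1 k B) T) k τ = B * sliceMatrix T k τ := by
  ext x i
  simp [sliceMatrix, mprod_update_one_apply, Matrix.mul_apply]

theorem hdet_eq_sum_sign_mul_det_sliceMatrix [NeZero d] (hd : Even d) {k m : Fin d}
    (hmk : m ≠ k) (T : (Fin d → Fin n) → F) :
    hdet T = ∑ τ with τ k = 1 ∧ τ m = 1,
      ((((∏ ℓ, Equiv.Perm.sign (τ ℓ)) : ℤˣ) : ℤ) : F) * (sliceMatrix T k τ).det := by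
  rw [hdet_eq_sum_filter_apply_eq_one hd m, ← Finset.filter_filter, Finset.sum_filter,
    Finset.sum_filter, Fintype.sum_eq_sum_filter_sum_update k 1]
  refine Finset.sum_congr rfl fun τ hτ => ?_
  simp only [update_of_ne hmk]
  rw [Finset.sum_ite_irrel, sum_hdetTerm_update T (Finset.mem_filter.mp hτ).2,
    Finset.sum_const_zero]

theorem hdet_mprod_update_one [NeZero d] (hd : Even d) (k : Fin d)
    (B : Matrix (Fin n) (Fin n) F) (T : (Fin d → Fin n) → F) :
    hdet (mprod (update 1 k B) T) = B.det * hdet T := by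
  obtain ⟨m, hmk⟩ : ∃ m, m ≠ k := Fintype.exists_ne_of_one_lt_card
    (by rw [Fintype.card_fin]; exact Nat.le_of_dvd (NeZero.pos d) hd.two_dvd) k
  rw [hdet_eq_sum_sign_mul_det_sliceMatrix hd hmk, hdet_eq_sum_sign_mul_det_sliceMatrix hd hmk,
    Finset.mul_sum]
  refine Finset.sum_congr rfl fun τ _ => ?_
  rw [sliceMatrix_mprod_update_one, Matrix.det_mul, mul_left_comm]

theorem hdet_mprod_piecewise [NeZero d] (hd : Even d) (A : Fin d → Matrix (Fin n) (Fin n) F)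
    (T : (Fin d → Fin n) → F) (s : Finset (Fin d)) :
    hdet (mprod (s.piecewise A 1) T) = (∏ ℓ ∈ s, (A ℓ).det) * hdet T := by
  induction s using Finset.induction_on with
  | empty => simp [mprod_one]
  | insert k s hk ih =>
    have hfactor : (insert k s).piecewise A 1
        = update (1 : Fin d → Matrix (Fin n) (Fin n) F) k (A k) * s.piecewise A 1 := by
      funext ℓ
      by_cases hℓ : ℓ = k
      · subst hℓ
        simp [hk]
      · simp [hℓ]
    rw [hfactor, ← mprod_mul, hdet_mprod_update_one hd, ih, Finset.prod_insert hk, mul_assoc]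

end Hdet

/-- Cayley's invariance formula for even `d`. -/
theorem hdet_mprod [Field F] {d n : ℕ} [NeZero d] (hd : Even d)
    (A : Fin d → Matrix (Fin n) (Fin n) F) (T : (Fin d → Fin n) → F) :
    hdet (mprod A T) = (∏ ℓ, (A ℓ).det) * hdet T := by
  simpa using hdet_mprod_piecewise hd A T Finset.univ
end

section
/- Hyperdeterminant of diagonal-equivalent tensors: for even d and n×n matrices A_1,...,A_d, the tensor T(i_1,...,i_d) = Σ_{ℓ=1}^n A_1(i_1,ℓ)···A_d(i_d,ℓ) satisfies det(T) = det(A_1)···det(A_d). -/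
open Finset

variable {F : Type*}

/-! Expanding every entry of `T i = ∑ ℓ, ∏ m, A m (i m) ℓ` writes `hdet T` as a sum over
column selections `f : Fin n → Fin n`, in which the sum over `σ` factors coordinatewise:
coordinate `0` (where `σ 0 = 1`) contributes `∏ i, A 0 i (f i)`, every other coordinate `m`
the minor of `A m` with columns `f`. These minors vanish unless `f` is a permutation, in which
case they equal `sign f * det (A m)`; since `d - 1` is odd the `d - 1` signs leave a single
`sign f`, and the remaining sum over `f` is `det (A 0)`. -/

open Equiv

theorem Fintype.sum_eq_sum_perm_of_not_injective {ι M : Type*} [Fintype ι] [DecidableEq ι]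
    [AddCommMonoid M] (g : (ι → ι) → M) (hg : ∀ f, ¬ Function.Injective f → g f = 0) :
    ∑ f, g f = ∑ σ : Perm ι, g σ := by
  let coe : Perm ι ↪ (ι → ι) := ⟨(⇑), DFunLike.coe_injective⟩
  calc ∑ f, g f = ∑ f ∈ univ.map coe, g f :=
        (Finset.sum_subset (subset_univ _) fun f _ hf => hg f fun hinj => hf <|
          Finset.mem_map.2 ⟨.ofBijective f hinj.bijective_of_finite, mem_univ _, rfl⟩).symm
    _ = ∑ σ : Perm ι, g σ := Finset.sum_map _ _ _

section
variable [CommRing F] {d n : ℕ} [NeZero d]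

-- With the constraint `σ 0 = 1` in the index set, that set is a product over the coordinates.
theorem hdet_eq_sum_piFinset (T : (Fin d → Fin n) → F) :
    hdet T = ∑ σ ∈ Fintype.piFinset (fun m : Fin d => if m = 0 then {1} else univ),
      (∏ m, (Perm.sign (σ m) : F)) * ∏ i, T (fun m => σ m i) := by
  rw [hdet, ← sum_filter]
  refine sum_congr ?_ fun σ _ => by push_cast; rfl
  ext σ
  simp only [mem_filter, mem_univ, true_and, Fintype.mem_piFinset]
  refine ⟨fun h m => ?_, fun h => by simpa using h 0⟩
  split_ifs with hm <;> simp [hm, h]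

theorem hdet_sum_prod_eq_sum_prod (A : Fin d → Matrix (Fin n) (Fin n) F) :
    hdet (fun i : Fin d → Fin n => ∑ ℓ : Fin n, ∏ m : Fin d, A m (i m) ℓ) =
      ∑ f : Fin n → Fin n, ∏ m, ∑ π ∈ (if m = 0 then {1} else univ),
        (Perm.sign π : F) * ∏ i, A m (π i) (f i) := by
  rw [hdet_eq_sum_piFinset]
  simp_rw [prod_univ_sum, Fintype.piFinset_univ, mul_sum]
  rw [sum_comm]
  refine sum_congr rfl fun f _ => sum_congr rfl fun σ _ => ?_
  rw [prod_comm, prod_mul_distrib]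

theorem hdet_sum_prod_eq_sum_det_submatrix (A : Fin d → Matrix (Fin n) (Fin n) F) :
    hdet (fun i : Fin d → Fin n => ∑ ℓ : Fin n, ∏ m : Fin d, A m (i m) ℓ) =
      ∑ f : Fin n → Fin n,
        (∏ i, A 0 i (f i)) * ∏ m ∈ univ.erase 0, ((A m).submatrix id f).det := by
  rw [hdet_sum_prod_eq_sum_prod]
  refine sum_congr rfl fun f _ => ?_
  rw [← mul_prod_erase univ _ (mem_univ 0)]
  congr 1
  · simp
  · refine prod_congr rfl fun m hm => ?_
    simp [(mem_erase.1 hm).1, Matrix.det_apply']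

end

/-- hyperdeterminant of diagonal-equivalent tensors. -/
theorem hdet_diagonal_equivalent [Field F] {d n : ℕ} [NeZero d] (hd : Even d)
    (A : Fin d → Matrix (Fin n) (Fin n) F) :
    hdet (fun i : Fin d → Fin n => ∑ ℓ : Fin n, ∏ m : Fin d, A m (i m) ℓ) =
      ∏ m, (A m).det := by
  have hd₁ : 1 < d := by
    obtain ⟨k, rfl⟩ := hd
    have := NeZero.ne (k + k)
    omega
  have hodd : Odd (d - 1) := Nat.Even.sub_odd hd₁.le hd odd_one
  calc _ = ∑ f : Fin n → Fin n,
          (∏ i, A 0 i (f i)) * ∏ m ∈ univ.erase 0, ((A m).submatrix id f).det :=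
        hdet_sum_prod_eq_sum_det_submatrix A
    _ = ∑ σ : Perm (Fin n),
          (∏ i, A 0 i (σ i)) * ∏ m ∈ univ.erase 0, ((A m).submatrix id σ).det := by
        refine Fintype.sum_eq_sum_perm_of_not_injective _ fun f hf => ?_
        obtain ⟨a, b, hab, hne⟩ := Function.not_injective_iff.1 hf
        refine mul_eq_zero_of_right _ <|
          prod_eq_zero (i := ⟨1, hd₁⟩) (by simp [Fin.ext_iff]) ?_
        exact Matrix.det_zero_of_column_eq hne fun k => by simp [hab]
    _ = ∑ σ : Perm (Fin n),
          (Perm.sign σ : F) * (∏ i, A 0 i (σ i)) * ∏ m ∈ univ.erase 0, (A m).det := by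
        refine sum_congr rfl fun σ _ => ?_
        have hsign : ((Perm.sign σ : ℤ) : F) ^ (d - 1) = Perm.sign σ := by
          rcases Int.units_eq_one_or (Perm.sign σ) with h | h <;> simp [h, hodd.neg_one_pow]
        simp_rw [Matrix.det_permute', prod_mul_distrib, prod_const, card_erase_of_mem (mem_univ _),
          card_univ, Fintype.card_fin, hsign]
        ring
    _ = ∏ m, (A m).det := by
        rw [← sum_mul, ← mul_prod_erase univ _ (mem_univ 0), ← Matrix.det_transpose (A 0),
          Matrix.det_apply']
        simp
end

section
/- Minor summation formula: for even d and X, Y ∈ T^d(n), det(X + Y) = Σ_{k=0}^n Σ_{I_1,...,I_d ∈ C([n],k)} ε_{I_1,...,I_d} det(X_{I_1,...,I_d}) det(Y_{Ī_1,...,Ī_d}), where ε_{I_1,...,I_d} = sgn(π_{I_1}···π_{I_d}) with π_I the permutation listing I in increasing order followed by its complement in increasing order. -/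
open Finset

variable {F : Type*}

/-- The permutation `π_I` listing the elements of `I` in increasing order
followed by the elements of its complement in increasing order. -/
noncomputable def piPerm {n : ℕ} (I : Finset (Fin n)) : Equiv.Perm (Fin n) :=
  (((finCongr (by simp [Finset.card_add_card_compl] :
        I.card + Iᶜ.card = n)).symm.trans finSumFinEquiv.symm).trans
    ((Equiv.sumCongr (I.orderIsoOfFin rfl).toEquiv
      ((Iᶜ.orderIsoOfFin rfl).toEquiv.trans
        (Equiv.subtypeEquivRight (fun x => by simp)))).trans
      (Equiv.sumCompl (· ∈ I))))

/-!
Expand `∏ᵢ (X + Y)(σ · i)` over the sets `S` of positions taken from `X`, and group the terms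
by the family of images `Iℓ = σℓ(S)`. The families `σ` with `σ₀ = 1` and `σℓ(I₀) = Iℓ` are
exactly `σℓ = Eℓ ∘ (τℓ ⊕ ρℓ) ∘ E₀⁻¹`, where `Eℓ` lists `Iℓ` and then `Iℓᶜ` in increasing order
and `τ`, `ρ` run over the normalised permutation families of the two minors. As
`Eℓ ∘ E₀⁻¹ = π_{Iℓ} π_{I₀}⁻¹`, the sign of `σℓ` is `sgn π_{Iℓ} · sgn π_{I₀} · sgn τℓ · sgn ρℓ`,
and the `d` factors `sgn π_{I₀}` cancel because `d` is even.
-/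

open Equiv Equiv.Perm

namespace Equiv.Perm

variable {α β γ : Type*}

def sumCongrVia (E E' : β ⊕ γ ≃ α) (τ : Perm β) (ρ : Perm γ) : Perm α :=
  E.symm.trans ((sumCongr τ ρ).trans E')

variable (E E' : β ⊕ γ ≃ α)

@[simp]
theorem sumCongrVia_apply_inl (τ : Perm β) (ρ : Perm γ) (b : β) :
    sumCongrVia E E' τ ρ (E (Sum.inl b)) = E' (Sum.inl (τ b)) := by
  simp [sumCongrVia]

@[simp]
theorem sumCongrVia_apply_inr (τ : Perm β) (ρ : Perm γ) (c : γ) :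
    sumCongrVia E E' τ ρ (E (Sum.inr c)) = E' (Sum.inr (ρ c)) := by
  simp [sumCongrVia]

theorem sumCongrVia_self_one : sumCongrVia E E (1 : Perm β) (1 : Perm γ) = 1 := by
  ext; simp [sumCongrVia]

theorem sumCongrVia_inj {τ τ' : Perm β} {ρ ρ' : Perm γ} :
    sumCongrVia E E' τ ρ = sumCongrVia E E' τ' ρ' ↔ τ = τ' ∧ ρ = ρ' := by
  refine ⟨fun h => ?_, fun h => by rw [h.1, h.2]⟩
  rw [← Prod.mk.injEq]
  apply sumCongrHom_injective
  ext x
  simpa [sumCongrVia] using congrArg E'.symm (DFunLike.congr_fun h (E x))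

theorem image_sumCongrVia_range_inl (τ : Perm β) (ρ : Perm γ) :
    sumCongrVia E E' τ ρ '' Set.range (E ∘ Sum.inl) = Set.range (E' ∘ Sum.inl) := by
  have : sumCongrVia E E' τ ρ ∘ E ∘ Sum.inl = E' ∘ Sum.inl ∘ τ := funext (by simp)
  rw [← Set.range_comp, this, ← Function.comp_assoc, τ.surjective.range_comp]

theorem exists_sumCongrVia_eq [Finite β] [Finite γ] {σ : Perm α}
    (h : σ '' Set.range (E ∘ Sum.inl) ⊆ Set.range (E' ∘ Sum.inl)) :
    ∃ τ ρ, sumCongrVia E E' τ ρ = σ := by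
  set π : Perm (β ⊕ γ) := E.trans (σ.trans E'.symm)
  have hπ : Set.MapsTo π (Set.range Sum.inl) (Set.range Sum.inl) := by
    rintro _ ⟨b, rfl⟩
    obtain ⟨b', hb'⟩ := h ⟨E (Sum.inl b), ⟨b, rfl⟩, rfl⟩
    exact ⟨b', by simp [π, ← hb']⟩
  obtain ⟨⟨τ, ρ⟩, hτρ⟩ := mem_sumCongrHom_range_of_perm_mapsTo_inl hπ
  refine ⟨τ, ρ, Equiv.ext fun x => ?_⟩
  simp only [sumCongrHom_apply] at hτρ
  simp [sumCongrVia, hτρ, π]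

theorem sign_sumCongrVia [Fintype α] [DecidableEq α] [Fintype β] [DecidableEq β] [Fintype γ]
    [DecidableEq γ] (τ : Perm β) (ρ : Perm γ) :
    sign (sumCongrVia E E' τ ρ) = sign (E.symm.trans E') * (sign τ * sign ρ) := by
  have : sumCongrVia E E' τ ρ = (E.permCongr (sumCongr τ ρ)).trans (E.symm.trans E') := by
    ext; simp [sumCongrVia, permCongr_apply]
  rw [this, sign_trans, sign_permCongr, sign_sumCongr]

end Equiv.Perm

section Families

variable {ι α β γ M : Type*} [Fintype ι] [DecidableEq ι] [Fintype α] [DecidableEq α]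
  [AddCommMonoid M]

theorem sum_filter_image_eq_eq_sum_sumCongrVia [Fintype β] [DecidableEq β] [Fintype γ]
    [DecidableEq γ] (I : ι → Finset α) (E : ι → β ⊕ γ ≃ α)
    (hE : ∀ i, Set.range (E i ∘ Sum.inl) = I i) (i₀ : ι) (f : (ι → Perm α) → M) :
    ∑ σ ∈ univ.filter (fun σ : ι → Perm α => σ i₀ = 1 ∧ (fun i => (I i₀).image (σ i)) = I),
        f σ =
      ∑ p ∈ univ.filter (fun τ : ι → Perm β => τ i₀ = 1) ×ˢ
          univ.filter (fun ρ : ι → Perm γ => ρ i₀ = 1),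
        f fun i => sumCongrVia (E i₀) (E i) (p.1 i) (p.2 i) := by
  have himage (σ : Perm α) (i : ι) :
      (I i₀).image σ = I i ↔ σ '' Set.range (E i₀ ∘ Sum.inl) = Set.range (E i ∘ Sum.inl) := by
    rw [← coe_inj, coe_image, hE, hE]
  symm
  apply sum_nbij fun p i => sumCongrVia (E i₀) (E i) (p.1 i) (p.2 i)
  · rintro ⟨τ, ρ⟩ hp
    simp only [mem_product, mem_filter, mem_univ, true_and, funext_iff, himage] at hp ⊢
    exact ⟨by rw [hp.1, hp.2, sumCongrVia_self_one], fun i => image_sumCongrVia_range_inl _ _ _ _⟩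
  · rintro ⟨τ, ρ⟩ - ⟨τ', ρ'⟩ - h
    have h' := fun i => (sumCongrVia_inj (E i₀) (E i)).1 (congrFun h i)
    simp only [Prod.mk.injEq]
    exact ⟨funext fun i => (h' i).1, funext fun i => (h' i).2⟩
  · intro σ hσ
    simp only [coe_filter, mem_univ, true_and, Set.mem_ofPred_eq, funext_iff, himage] at hσ
    choose τ ρ hτρ using fun i => exists_sumCongrVia_eq (E i₀) (E i) (hσ.2 i).subset
    have h₀ := (sumCongrVia_inj (E i₀) (E i₀)).1
      ((hτρ i₀).trans (hσ.1.trans (sumCongrVia_self_one (E i₀)).symm))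
    exact ⟨(τ, ρ), by simpa using h₀, funext hτρ⟩
  · intro p _
    rfl

theorem sum_eq_sum_filter_image_eq (σ : ι → Perm α) {i₀ : ι} (h : σ i₀ = 1)
    (g : Finset α → M) :
    ∑ S, g S = ∑ I ∈ univ.filter (fun I : ι → Finset α => (fun i => (I i₀).image (σ i)) = I),
      g (I i₀) := by
  refine sum_nbij' (fun S i => S.image (σ i)) (fun I => I i₀) (by simp [h]) (by simp)
    (by simp [h]) (fun I hI => (mem_filter.1 hI).2) (by simp [h])

theorem filter_image_eq_eq_empty (I : ι → Finset α) {i₀ : ι}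
    (hI : ¬ ∀ i, (I i).card = (I i₀).card) :
    univ.filter (fun σ : ι → Perm α => σ i₀ = 1 ∧ (fun i => (I i₀).image (σ i)) = I) = ∅ := by
  refine filter_false_of_mem fun σ _ hσ => hI fun i => ?_
  rw [← congrFun hσ.2 i]
  exact card_image_of_injective _ (σ i).injective

end Families

section Split

variable {n k m : ℕ}

def splitEquiv (I : Finset (Fin n)) (hk : I.card = k) (hm : Iᶜ.card = m) :
    Fin k ⊕ Fin m ≃ Fin n :=
  (Equiv.sumCongr (I.orderIsoOfFin hk).toEquiv
    ((Iᶜ.orderIsoOfFin hm).toEquiv.trans (Equiv.subtypeEquivRight fun x => by simp))).trans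
    (Equiv.sumCompl (· ∈ I))

variable (I : Finset (Fin n)) (hk : I.card = k) (hm : Iᶜ.card = m)

@[simp]
theorem splitEquiv_inl (j : Fin k) : splitEquiv I hk hm (Sum.inl j) = I.orderIsoOfFin hk j :=
  rfl

@[simp]
theorem splitEquiv_inr (j : Fin m) : splitEquiv I hk hm (Sum.inr j) = Iᶜ.orderIsoOfFin hm j :=
  rfl

theorem range_splitEquiv_inl : Set.range (splitEquiv I hk hm ∘ Sum.inl) = I := by
  have : splitEquiv I hk hm ∘ Sum.inl = I.orderEmbOfFin hk := funext fun j => by simp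
  rw [this, range_orderEmbOfFin]

theorem prod_splitEquiv_inl {M : Type*} [CommMonoid M] (f : Fin n → M) :
    ∏ j, f (splitEquiv I hk hm (Sum.inl j)) = ∏ i ∈ I, f i :=
  ((I.orderIsoOfFin hk).toEquiv.prod_comp fun i => f i).trans (prod_coe_sort I f)

theorem prod_splitEquiv_inr {M : Type*} [CommMonoid M] (f : Fin n → M) :
    ∏ j, f (splitEquiv I hk hm (Sum.inr j)) = ∏ i ∈ Iᶜ, f i :=
  ((Iᶜ.orderIsoOfFin hm).toEquiv.prod_comp fun i => f i).trans (prod_coe_sort Iᶜ f)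

theorem piPerm_eq_splitEquiv (hkm : k + m = n) :
    piPerm I = (finSumFinEquiv.trans (finCongr hkm)).symm.trans (splitEquiv I hk hm) := by
  subst hk hm
  rfl

theorem splitEquiv_symm_trans_splitEquiv (J : Finset (Fin n)) (hk' : J.card = k)
    (hm' : Jᶜ.card = m) :
    (splitEquiv I hk hm).symm.trans (splitEquiv J hk' hm') = piPerm J * (piPerm I)⁻¹ := by
  have hkm : k + m = n := by rw [← hk, ← hm, card_add_card_compl, Fintype.card_fin]
  rw [piPerm_eq_splitEquiv I hk hm hkm, piPerm_eq_splitEquiv J hk' hm' hkm]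
  ext
  simp [Perm.mul_apply]

end Split

section MinorSummation

variable [CommRing F] {d n : ℕ} [NeZero d]

theorem hdet_eq_sum_filter (T : (Fin d → Fin n) → F) :
    hdet T = ∑ σ ∈ univ.filter (fun σ : Fin d → Perm (Fin n) => σ 0 = 1),
      ((((∏ ℓ, sign (σ ℓ)) : ℤˣ) : ℤ) : F) * ∏ i, T fun ℓ => σ ℓ i := by
  rw [hdet, sum_filter]

theorem hdet_add_eq_sum_filter_image_eq (X Y : (Fin d → Fin n) → F) :
    hdet (X + Y) = ∑ I : Fin d → Finset (Fin n),
      ∑ σ ∈ univ.filter (fun σ : Fin d → Perm (Fin n) =>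
          σ 0 = 1 ∧ (fun ℓ => (I 0).image (σ ℓ)) = I),
        ((((∏ ℓ, sign (σ ℓ)) : ℤˣ) : ℤ) : F) *
          ((∏ i ∈ I 0, X fun ℓ => σ ℓ i) * ∏ i ∈ (I 0)ᶜ, Y fun ℓ => σ ℓ i) := by
  rw [hdet_eq_sum_filter]
  calc _ = ∑ σ ∈ univ.filter (fun σ : Fin d → Perm (Fin n) => σ 0 = 1),
        ∑ I ∈ univ.filter (fun I : Fin d → Finset (Fin n) => (fun ℓ => (I 0).image (σ ℓ)) = I),
          ((((∏ ℓ, sign (σ ℓ)) : ℤˣ) : ℤ) : F) *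
            ((∏ i ∈ I 0, X fun ℓ => σ ℓ i) * ∏ i ∈ (I 0)ᶜ, Y fun ℓ => σ ℓ i) := by
        refine sum_congr rfl fun σ hσ => ?_
        rw [Pi.add_def, Fintype.prod_add, mul_sum]
        exact sum_eq_sum_filter_image_eq σ (mem_filter.1 hσ).2 _
    _ = _ := by
        refine sum_comm' fun σ I => ?_
        simp only [mem_filter, mem_univ, true_and]
        tauto

theorem sum_filter_image_eq_eq_mul_hdet (hd : Even d) (X Y : (Fin d → Fin n) → F)
    (I : Fin d → Finset (Fin n)) {k : ℕ} (h : ∀ ℓ, (I ℓ).card = k) :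
    ∑ σ ∈ univ.filter (fun σ : Fin d → Perm (Fin n) =>
          σ 0 = 1 ∧ (fun ℓ => (I 0).image (σ ℓ)) = I),
        ((((∏ ℓ, sign (σ ℓ)) : ℤˣ) : ℤ) : F) *
          ((∏ i ∈ I 0, X fun ℓ => σ ℓ i) * ∏ i ∈ (I 0)ᶜ, Y fun ℓ => σ ℓ i) =
      ((((∏ ℓ, sign (piPerm (I ℓ))) : ℤˣ) : ℤ) : F) *
        hdet (fun j : Fin d → Fin k => X fun ℓ => ((I ℓ).orderIsoOfFin (h ℓ) (j ℓ) : Fin n)) *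
        hdet (fun j : Fin d → Fin (n - k) =>
          Y fun ℓ => ((I ℓ)ᶜ.orderIsoOfFin (by simp [card_compl, h ℓ]) (j ℓ) : Fin n)) := by
  have hc : ∀ ℓ, (I ℓ)ᶜ.card = n - k := fun ℓ => by simp [card_compl, h ℓ]
  set E := fun ℓ => splitEquiv (I ℓ) (h ℓ) (hc ℓ)
  have hsign (τ : Fin d → Perm (Fin k)) (ρ : Fin d → Perm (Fin (n - k))) :
      ∏ ℓ, sign (sumCongrVia (E 0) (E ℓ) (τ ℓ) (ρ ℓ)) =
        (∏ ℓ, sign (piPerm (I ℓ))) * ((∏ ℓ, sign (τ ℓ)) * ∏ ℓ, sign (ρ ℓ)) := by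
    simp only [E, sign_sumCongrVia, splitEquiv_symm_trans_splitEquiv, map_mul, sign_inv,
      prod_mul_distrib, prod_const, card_univ, Fintype.card_fin]
    rw [Int.units_pow_eq_pow_mod_two, Nat.even_iff.mp hd, pow_zero, mul_one]
  rw [sum_filter_image_eq_eq_sum_sumCongrVia I E (fun ℓ => range_splitEquiv_inl _ _ _),
    hdet_eq_sum_filter, hdet_eq_sum_filter, mul_assoc, sum_mul_sum, sum_product]
  simp only [mul_sum]
  refine sum_congr rfl fun τ _ => sum_congr rfl fun ρ _ => ?_
  rw [hsign, ← prod_splitEquiv_inl (I 0) (h 0) (hc 0), ← prod_splitEquiv_inr (I 0) (h 0) (hc 0)]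
  simp only [E, sumCongrVia_apply_inl, sumCongrVia_apply_inr]
  simp only [splitEquiv_inl, splitEquiv_inr]
  push_cast
  ring

end MinorSummation

/-- the minor summation formula for hyperdeterminants. -/
theorem hdet_add_minor_summation [Field F] {d n : ℕ} [NeZero d] (hd : Even d)
    (X Y : (Fin d → Fin n) → F) :
    hdet (X + Y) =
      ∑ k ∈ Finset.range (n + 1), ∑ I : Fin d → Finset (Fin n),
        if h : ∀ ℓ, (I ℓ).card = k then
          ((((∏ ℓ, Equiv.Perm.sign (piPerm (I ℓ))) : ℤˣ) : ℤ) : F) *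
          hdet (fun j : Fin d → Fin k =>
            X fun ℓ => ((I ℓ).orderIsoOfFin (h ℓ) (j ℓ) : Fin n)) *
          hdet (fun j : Fin d → Fin (n - k) =>
            Y fun ℓ => ((I ℓ)ᶜ.orderIsoOfFin
              (by simp [Finset.card_compl, h ℓ]) (j ℓ) : Fin n))
        else 0 := by
  rw [hdet_add_eq_sum_filter_image_eq, sum_comm]
  refine sum_congr rfl fun I _ => ?_
  by_cases hI : ∀ ℓ, (I ℓ).card = (I 0).card
  · have hmem : (I 0).card ∈ range (n + 1) :=
      mem_range_succ_iff.2 (card_le_univ _ |>.trans_eq (Fintype.card_fin n))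
    rw [sum_filter_image_eq_eq_mul_hdet hd X Y I hI,
      sum_eq_single_of_mem _ hmem fun k _ hk => dif_neg fun h => hk (h 0).symm, dif_pos hI]
  · rw [filter_image_eq_eq_empty I hI, sum_empty]
    exact (sum_eq_zero fun k _ => dif_neg fun h => hI fun ℓ => (h ℓ).trans (h 0).symm).symm
end

section
/- Laplace expansion for hyperdeterminants: for even d and T ∈ T^d(n), det(T) = Σ_{i_2,...,i_d ∈ [n]} (−1)^{1+i_2+...+i_d} T(1, i_2,...,i_d) det(T_{\bar{1}, \bar{i_2},...,\bar{i_d}}), where T_{\bar{1},\bar{i_2},...,\bar{i_d}} is the subtensor obtained by deleting index 1 from the first coordinate and index i_k from the k-th coordinate. -/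
open Finset

variable {F : Type*}

/-!
A permutation of `Fin (n + 1)` is uniquely of the form `0 ↦ p`, `j.succ ↦ p.succAbove (π j)`
with `p : Fin (n + 1)` and `π : Perm (Fin n)`, and its sign is `(-1) ^ p * sign π`.
Parametrising each `σ ℓ` in the hyperdeterminant this way, the factor `i = 0` of each product
is `T v`, the remaining factors form a summand of the hyperdeterminant of the minor of `T`
at `v`, and the constraint `σ 0 = 1` becomes `v 0 = 0 ∧ π 0 = 1`.
-/

namespace Equiv.Perm

variable {n : ℕ}

def consSuccAbove (p : Fin (n + 1) × Perm (Fin n)) : Perm (Fin (n + 1)) :=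
  p.1.cycleRange.symm * decomposeFin.symm (0, p.2)

@[simp] lemma consSuccAbove_apply_zero (p : Fin (n + 1) × Perm (Fin n)) :
    consSuccAbove p 0 = p.1 := by
  simp [consSuccAbove]

@[simp] lemma consSuccAbove_apply_succ (p : Fin (n + 1) × Perm (Fin n)) (j : Fin n) :
    consSuccAbove p j.succ = p.1.succAbove (p.2 j) := by
  simp [consSuccAbove]

lemma sign_consSuccAbove (p : Fin (n + 1) × Perm (Fin n)) :
    sign (consSuccAbove p) = (-1) ^ (p.1 : ℕ) * sign p.2 := by
  simp [consSuccAbove]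

lemma consSuccAbove_bijective : Function.Bijective (consSuccAbove (n := n)) := by
  refine (Fintype.bijective_iff_injective_and_card _).mpr ⟨?_, ?_⟩
  · rintro ⟨p, π⟩ ⟨q, ρ⟩ h
    obtain rfl : p = q := by simpa using congr($h 0)
    obtain rfl : π = ρ := Equiv.ext fun j => by simpa using congr($h j.succ)
    rfl
  · simp [Fintype.card_perm, Nat.factorial_succ]

lemma consSuccAbove_eq_one_iff {p : Fin (n + 1)} {π : Perm (Fin n)} :
    consSuccAbove (p, π) = 1 ↔ p = 0 ∧ π = 1 := by
  have h₁ : consSuccAbove ((0 : Fin (n + 1)), (1 : Perm (Fin n))) = 1 := by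
    ext i
    cases i using Fin.cases <;> simp
  rw [← h₁, consSuccAbove_bijective.injective.eq_iff, Prod.mk.injEq]

lemma sum_pi_perm_fin_succ {ι M : Type*} [Fintype ι] [DecidableEq ι] [AddCommMonoid M]
    (g : (ι → Perm (Fin (n + 1))) → M) :
    ∑ σ, g σ = ∑ v : ι → Fin (n + 1), ∑ π : ι → Perm (Fin n),
      g fun ℓ => consSuccAbove (v ℓ, π ℓ) :=
  calc ∑ σ, g σ = ∑ p : ι → Fin (n + 1) × Perm (Fin n), g fun ℓ => consSuccAbove (p ℓ) :=
        (Fintype.sum_equiv (.piCongrRight fun _ => .ofBijective _ consSuccAbove_bijective)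
          _ _ fun _ => rfl).symm
    _ = _ := (Fintype.sum_equiv (arrowProdEquivProdArrow _ _ _) _
          (fun q => g fun ℓ => consSuccAbove (q.1 ℓ, q.2 ℓ)) fun _ => rfl).trans
        (Fintype.sum_prod_type _)

end Equiv.Perm

open Equiv.Perm in
lemma hdet_summand_consSuccAbove [CommRing F] {d n : ℕ} (T : (Fin d → Fin (n + 1)) → F)
    (v : Fin d → Fin (n + 1)) (π : Fin d → Equiv.Perm (Fin n)) :
    ((((∏ ℓ, sign (consSuccAbove (v ℓ, π ℓ))) : ℤˣ) : ℤ) : F) *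
        ∏ i, T (fun ℓ => consSuccAbove (v ℓ, π ℓ) i) =
      (-1) ^ (∑ ℓ, (v ℓ : ℕ)) * T v *
        (((((∏ ℓ, sign (π ℓ)) : ℤˣ) : ℤ) : F) * ∏ j, T fun ℓ => (v ℓ).succAbove (π ℓ j)) := by
  simp only [sign_consSuccAbove, prod_mul_distrib, prod_pow_eq_pow_sum, Fin.prod_univ_succ,
    consSuccAbove_apply_zero, consSuccAbove_apply_succ]
  push_cast
  ring

/-- Zero-based indices: `v ℓ` is the paper's `i_ℓ - 1`. -/
theorem hdet_laplace_expansion_general [Field F] {d n : ℕ} [NeZero d]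
    (T : (Fin d → Fin (n + 1)) → F) :
    hdet T =
      ∑ v : Fin d → Fin (n + 1),
        if v 0 = 0 then
          (-1 : F) ^ (∑ ℓ, ((v ℓ) : ℕ)) * T v *
            hdet (fun j : Fin d → Fin n => T fun ℓ => (v ℓ).succAbove (j ℓ))
        else 0 := by
  rw [hdet, Equiv.Perm.sum_pi_perm_fin_succ]
  refine sum_congr rfl fun v _ => ?_
  simp only [Equiv.Perm.consSuccAbove_eq_one_iff, hdet_summand_consSuccAbove]
  by_cases hv : v 0 = 0
  · simp only [hv, true_and, if_true, hdet, mul_sum, mul_ite, mul_zero]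
  · simp [hv]

/-- the Laplace expansion for hyperdeterminants (indices are
zero-based; since `d` is even, the sign `(−1)^{1+i_2+⋯+i_d}` of the one-based
formula equals `(−1)^{Σ_ℓ v_ℓ}` in zero-based indices `v`). -/
theorem hdet_laplace_expansion [Field F] {d n : ℕ} [NeZero d] (hd : Even d)
    (T : (Fin d → Fin (n + 1)) → F) :
    hdet T =
      ∑ v : Fin d → Fin (n + 1),
        if v 0 = 0 then
          (-1 : F) ^ (∑ ℓ, ((v ℓ) : ℕ)) * T v *
            hdet (fun j : Fin d → Fin n => T fun ℓ => (v ℓ).succAbove (j ℓ))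
        else 0 :=
  hdet_laplace_expansion_general T
end

section
/- Generic vanishing lemma: let d be even and suppose every simple tensor in S ⊆ T^d(n) is k-null for some k > 1. If T ∈ T^d(n) satisfies rank_S(T) < n/(k−1), then det(T) = 0. -/
open Finset

variable {F : Type*}

/-! Write `T = ∑ m, c m` with `rankS S T` summands from `S`. The hyperdeterminant is multilinear in
the slices along the first coordinate, so `hdet T` is a sum of hyperdeterminants of tensors whose
`i`-th slice is taken from `c (f i)`, one for each `f : Fin n → Fin (rankS S T)`. As
`(k - 1) * rankS S T < n`, some `c m` supplies at least `k` slices. Decomposing every permutation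
uniquely as `r * τ`, with `τ` permuting those `k` slices and `r` increasing on them, gives a
Laplace expansion of the hyperdeterminant along these slices into `k × ⋯ × k` minors of `c m`,
which vanish because `c m` is `k`-null. -/

open Equiv

theorem Equiv.Perm.eq_one_of_strictMono_comp {α : Type*} [LinearOrder α] {k : ℕ}
    {f : Fin k → α} {π : Perm (Fin k)} (hf : StrictMono f) (hfπ : StrictMono (f ∘ π)) :
    π = 1 := by
  have h : f ∘ π = f ∘ (1 : Perm (Fin k)) :=
    Tuple.unique_monotone hfπ.monotone (by simpa using hf.monotone)
  ext a
  exact congrArg Fin.val (hf.injective (congrFun h a))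

theorem Equiv.Perm.sign_viaEmbedding {α β : Type*} [Fintype α] [DecidableEq α] [Fintype β]
    [DecidableEq β] (e : Perm α) (ι : α ↪ β) :
    Perm.sign (e.viaEmbedding ι) = Perm.sign e := by
  unfold Perm.viaEmbedding
  convert Perm.sign_extendDomain e _

section SortedPerm

variable {n k : ℕ} (s : Fin k ↪o Fin n)

noncomputable abbrev liftPerm : Perm (Fin k) →* Perm (Fin n) :=
  Perm.viaEmbeddingHom s.toEmbedding

variable {s}

@[simp]
theorem liftPerm_apply_apply (τ : Perm (Fin k)) (a : Fin k) : liftPerm s τ (s a) = s (τ a) :=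
  Perm.viaEmbedding_apply τ s.toEmbedding a

theorem liftPerm_apply_of_notMem {τ : Perm (Fin k)} {x : Fin n} (hx : x ∉ Set.range s) :
    liftPerm s τ x = x :=
  Perm.viaEmbedding_apply_of_notMem τ s.toEmbedding x hx

@[simp]
theorem sign_liftPerm (τ : Perm (Fin k)) : Perm.sign (liftPerm s τ) = Perm.sign τ :=
  Perm.sign_viaEmbedding τ s.toEmbedding

variable (s)

/-- One representative in each left coset of the permutations supported on the range of `s`. -/
abbrev SortedPerm : Type := {r : Perm (Fin n) // StrictMono (r ∘ s)}

theorem bijective_mul_liftPerm :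
    Function.Bijective fun p : SortedPerm s × Perm (Fin k) =>
      (p.1 : Perm (Fin n)) * liftPerm s p.2 := by
  constructor
  · rintro ⟨⟨r, hr⟩, τ⟩ ⟨⟨r', hr'⟩, τ'⟩ h
    have h' : r * liftPerm s τ = r' * liftPerm s τ' := h
    have hτ : τ' * τ⁻¹ = 1 := by
      refine Perm.eq_one_of_strictMono_comp hr' ?_
      convert hr using 1
      ext a
      simpa using congrArg Fin.val (DFunLike.congr_fun h' (s (τ⁻¹ a))).symm
    obtain rfl : τ = τ' := (mul_inv_eq_one.mp hτ).symm
    obtain rfl : r = r' := mul_right_cancel h'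
    rfl
  · intro σ
    set π := Tuple.sort (σ ∘ s)
    refine ⟨(⟨σ * liftPerm s π, ?_⟩, π⁻¹), by simp⟩
    have : (σ * liftPerm s π : Perm (Fin n)) ∘ s = σ ∘ s ∘ π := by ext a; simp
    rw [this]
    exact (Tuple.monotone_sort _).strictMono_of_injective
      ((σ.injective.comp s.injective).comp π.injective)

noncomputable def sortedPermEquiv : SortedPerm s × Perm (Fin k) ≃ Perm (Fin n) :=
  Equiv.ofBijective _ (bijective_mul_liftPerm s)

end SortedPerm

theorem sum_pi_perm_eq_sum_sortedPerm_liftPerm {M : Type*} [AddCommMonoid M] {d n k : ℕ}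
    (s : Fin k ↪o Fin n) (G : (Fin d → Perm (Fin n)) → M) :
    ∑ σ, G σ = ∑ r : Fin d → SortedPerm s, ∑ τ : Fin d → Perm (Fin k),
      G fun ℓ => r ℓ * liftPerm s (τ ℓ) := by
  rw [← ((arrowProdEquivProdArrow _ _ _).symm.trans
    (piCongrRight fun _ => sortedPermEquiv s)).sum_comp, Fintype.sum_prod_type]
  rfl

section Hyperdeterminant

variable [CommRing F] {d n k : ℕ} (s : Fin k ↪o Fin n)

theorem prod_mul_liftPerm_apply (U : (Fin d → Fin n) → F) (r : Fin d → Perm (Fin n))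
    (τ : Fin d → Perm (Fin k)) :
    ∏ i, U (fun ℓ => (r ℓ * liftPerm s (τ ℓ)) i) =
      (∏ i ∈ (univ.map s.toEmbedding)ᶜ, U fun ℓ => r ℓ i) * ∏ a, U fun ℓ => r ℓ (s (τ ℓ a)) := by
  rw [← prod_mul_prod_compl (univ.map s.toEmbedding), prod_map, mul_comm]
  congr 1
  · refine prod_congr rfl fun i hi => ?_
    have hi : i ∉ Set.range s := by simpa using hi
    simp [liftPerm_apply_of_notMem hi]
  · simp

variable [NeZero d]

theorem hdet_sum {r : ℕ} (c : Fin r → (Fin d → Fin n) → F) :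
    hdet (∑ m, c m) = ∑ f : Fin n → Fin r, hdet fun i => c (f (i 0)) i := by
  simp only [hdet]
  rw [sum_comm]
  refine sum_congr rfl fun σ _ => ?_
  split_ifs with hσ
  · simp only [Finset.sum_apply, prod_univ_sum, Fintype.piFinset_univ, mul_sum, hσ, Perm.one_apply]
  · simp

theorem hdet_eq_sum_hdet_subT (U : (Fin d → Fin n) → F) :
    hdet U = ∑ r : Fin d → SortedPerm s,
      if (r 0 : Perm (Fin n)) = 1 then
        ((((∏ ℓ, Perm.sign (r ℓ : Perm (Fin n))) : ℤˣ) : ℤ) : F) *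
          (∏ i ∈ (univ.map s.toEmbedding)ᶜ, U fun ℓ => (r ℓ : Perm (Fin n)) i) *
            hdet (subT U fun ℓ => r ℓ ∘ s)
      else 0 := by
  rw [hdet, sum_pi_perm_eq_sum_sortedPerm_liftPerm s]
  refine sum_congr rfl fun r _ => ?_
  by_cases hr : (r 0 : Perm (Fin n)) = 1
  · rw [if_pos hr, hdet, mul_sum]
    refine sum_congr rfl fun τ _ => ?_
    simp only [hr, one_mul, map_eq_one_iff _ (Perm.viaEmbeddingHom_injective _)]
    split_ifs
    · rw [prod_mul_liftPerm_apply]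
      simp only [map_mul, sign_liftPerm, prod_mul_distrib]
      push_cast
      simp only [subT, Function.comp_apply]
      ring
    · rw [mul_zero]
  · rw [if_neg hr]
    refine sum_eq_zero fun τ _ => if_neg fun h => hr ?_
    have := (bijective_mul_liftPerm s).1 (a₁ := (r 0, τ 0)) (a₂ := (⟨1, s.strictMono⟩, 1))
      (by simpa using h)
    exact congrArg (fun p => (p.1 : Perm (Fin n))) this

end Hyperdeterminant

section Vanishing

variable [CommRing F] {d n k : ℕ} [NeZero d]

theorem hdet_eq_zero_of_eqOn_slices {c U : (Fin d → Fin n) → F} (hc : kNull k c)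
    (s : Fin k ↪o Fin n) (hU : ∀ i : Fin d → Fin n, i 0 ∈ Set.range s → U i = c i) :
    hdet U = 0 := by
  rw [hdet_eq_sum_hdet_subT s]
  refine sum_eq_zero fun r _ => ?_
  split_ifs with hr
  · have hminor : subT U (fun ℓ => r ℓ ∘ s) = subT c (fun ℓ => r ℓ ∘ s) :=
      funext fun j => hU _ (by simp [hr])
    rw [hminor, hc _ fun ℓ => (r ℓ).2, mul_zero]
  · rfl
end Vanishing

theorem hdet_eq_zero_of_rankS_lt_general [Field F] {d n k : ℕ} [NeZero d]
    (S : Set ((Fin d → Fin n) → F)) (hS : ∀ s ∈ S, kNull k s)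
    (T : (Fin d → Fin n) → F) (hT : (Decomps S T).Nonempty)
    (hr : (k - 1) * rankS S T < n) :
    hdet T = 0 := by
  obtain ⟨c, hcS, hc⟩ := Nat.sInf_mem hT
  rw [← hc, hdet_sum]
  refine sum_eq_zero fun f _ => ?_
  obtain ⟨m, hm⟩ := Fintype.exists_lt_card_fiber_of_mul_lt_card (n := k - 1) f
    (by rwa [Fintype.card_fin, Fintype.card_fin, mul_comm])
  obtain ⟨I, hIf, hI⟩ := exists_subset_card_eq (show k ≤ #{i | f i = m} by omega)
  refine hdet_eq_zero_of_eqOn_slices (hS _ (hcS m)) (I.orderEmbOfFin hI) fun i hi => ?_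
  rw [range_orderEmbOfFin] at hi
  simp only [(mem_filter.mp (hIf hi)).2]

/-- generic vanishing lemma.  If `d` is even, every simple tensor
in `S` is `k`-null for some `k > 1`, and `rank_S(T) < n/(k−1)`, then
`det(T) = 0`. -/
theorem hdet_eq_zero_of_rankS_lt [Field F] {d n k : ℕ} [NeZero d] (hd : Even d)
    (hk : 1 < k) (S : Set ((Fin d → Fin n) → F)) (hS : ∀ s ∈ S, kNull k s)
    (T : (Fin d → Fin n) → F) (hT : (Decomps S T).Nonempty)
    (hr : (k - 1) * rankS S T < n) :
    hdet T = 0 :=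
  hdet_eq_zero_of_rankS_lt_general S hS T hT hr
end

section
/- A tensor of odd partition rank 1 is 2-null: if S ∈ T^d(n) factors as S(i_1,...,i_d) = Y(i_{a_1},...,i_{a_k}) · Z(i_{b_1},...,i_{b_{d−k}}) for a set partition of [d] where the block {b_1,...,b_{d−k}} has odd size and does not contain 1, then every 2×···×2 subtensor of S has vanishing hyperdeterminant. -/
open Finset

variable {F : Type*}

/-! The swap `σ ↦ σ · c` on the coordinates in the odd block `B`, for a transposition `c`, is a
fixed-point-free involution on the terms of the hyperdeterminant sum. It leaves `σ 0` alone since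
`0 ∉ B`, it multiplies the sign by `sign c ^ |B| = -1`, and it keeps the product of the entries,
because the factor depending only on `Bᶜ` does not see it and the factor depending only on `B`
just has its columns permuted by `c`. So the terms cancel in pairs. -/

section OddPartition

variable {d n : ℕ}

theorem DependsOnlyOn.subT [CommRing F] {m : ℕ} {A : Set (Fin d)} {T : (Fin d → Fin n) → F}
    (hT : DependsOnlyOn A T) (e : Fin d → Fin m → Fin n) : DependsOnlyOn A (subT T e) :=
  fun _ _ hij => hT _ _ fun ℓ hℓ => congrArg (e ℓ) (hij ℓ hℓ)

def mulRightOn (B : Finset (Fin d)) (c : Equiv.Perm (Fin n))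
    (σ : Fin d → Equiv.Perm (Fin n)) : Fin d → Equiv.Perm (Fin n) :=
  fun ℓ => if ℓ ∈ B then σ ℓ * c else σ ℓ

variable {B : Finset (Fin d)} {c : Equiv.Perm (Fin n)} {σ : Fin d → Equiv.Perm (Fin n)}
  {ℓ : Fin d}

@[simp]
theorem mulRightOn_of_mem (h : ℓ ∈ B) : mulRightOn B c σ ℓ = σ ℓ * c := if_pos h

@[simp]
theorem mulRightOn_of_notMem (h : ℓ ∉ B) : mulRightOn B c σ ℓ = σ ℓ := if_neg h

theorem mulRightOn_mulRightOn (hc : c * c = 1) : mulRightOn B c (mulRightOn B c σ) = σ := by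
  funext ℓ
  by_cases h : ℓ ∈ B <;> simp [h, mul_assoc, hc]

theorem mulRightOn_ne (hc : c ≠ 1) (hB : B.Nonempty) : mulRightOn B c σ ≠ σ := by
  obtain ⟨ℓ, hℓ⟩ := hB
  intro h
  apply hc
  simpa [hℓ] using congrFun h ℓ

theorem prod_sign_mulRightOn :
    ∏ ℓ, Equiv.Perm.sign (mulRightOn B c σ ℓ)
      = Equiv.Perm.sign c ^ B.card * ∏ ℓ, Equiv.Perm.sign (σ ℓ) := by
  have hℓ : ∀ ℓ, Equiv.Perm.sign (mulRightOn B c σ ℓ)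
      = (if ℓ ∈ B then Equiv.Perm.sign c else 1) * Equiv.Perm.sign (σ ℓ) := by
    intro ℓ
    by_cases h : ℓ ∈ B <;> simp [h, mul_comm]
  rw [Finset.prod_congr rfl fun ℓ _ => hℓ ℓ, Finset.prod_mul_distrib, Finset.prod_ite_mem,
    Finset.univ_inter, Finset.prod_const]

theorem DependsOnlyOn.apply_mulRightOn_of_compl [CommRing F] {T : (Fin d → Fin n) → F}
    (hT : DependsOnlyOn ↑Bᶜ T) (i : Fin n) :
    T (fun ℓ => mulRightOn B c σ ℓ i) = T (fun ℓ => σ ℓ i) :=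
  hT _ _ fun ℓ hℓ => by simp_all

theorem DependsOnlyOn.apply_mulRightOn [CommRing F] {T : (Fin d → Fin n) → F}
    (hT : DependsOnlyOn ↑B T) (i : Fin n) :
    T (fun ℓ => mulRightOn B c σ ℓ i) = T (fun ℓ => σ ℓ (c i)) :=
  hT _ _ fun ℓ hℓ => by simp_all

theorem prod_mul_apply_mulRightOn [CommRing F] {T₁ T₂ : (Fin d → Fin n) → F}
    (hT₁ : DependsOnlyOn ↑Bᶜ T₁) (hT₂ : DependsOnlyOn ↑B T₂) :
    ∏ i, T₁ (fun ℓ => mulRightOn B c σ ℓ i) * T₂ (fun ℓ => mulRightOn B c σ ℓ i)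
      = ∏ i, T₁ (fun ℓ => σ ℓ i) * T₂ (fun ℓ => σ ℓ i) := by
  simp only [hT₁.apply_mulRightOn_of_compl, hT₂.apply_mulRightOn, Finset.prod_mul_distrib]
  rw [Fintype.prod_equiv c _ (fun i => T₂ (fun ℓ => σ ℓ i)) fun _ => rfl]

theorem hdet_mul_eq_zero_of_odd_card [CommRing F] [NeZero d] [Nontrivial (Fin n)]
    {T₁ T₂ : (Fin d → Fin n) → F}
    (hB : Odd B.card) (h0 : (0 : Fin d) ∉ B)
    (hT₁ : DependsOnlyOn ↑Bᶜ T₁) (hT₂ : DependsOnlyOn ↑B T₂) :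
    hdet (fun i => T₁ i * T₂ i) = 0 := by
  obtain ⟨a, b, hab⟩ := exists_pair_ne (Fin n)
  set c := Equiv.swap a b
  have hsign : ∀ σ, ∏ ℓ, Equiv.Perm.sign (mulRightOn B c σ ℓ)
      = -∏ ℓ, Equiv.Perm.sign (σ ℓ) := by
    intro σ
    rw [prod_sign_mulRightOn, Equiv.Perm.sign_swap hab, hB.neg_one_pow, neg_one_mul]
  refine Finset.sum_involution (fun σ _ => mulRightOn B c σ) (fun σ _ => ?_)
    (fun σ _ _ => mulRightOn_ne (by simpa [c] using hab) (Finset.card_pos.mp hB.pos))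
    (fun _ _ => Finset.mem_univ _) (fun σ _ => mulRightOn_mulRightOn (Equiv.swap_mul_self a b))
  simp only [mulRightOn_of_notMem h0, prod_mul_apply_mulRightOn hT₁ hT₂, hsign]
  split_ifs <;> push_cast <;> ring

end OddPartition

/-- a tensor of odd partition rank `1` is `2`-null. -/
theorem two_null_of_oddPartitionSimple [Field F] {d n : ℕ} [NeZero d]
    (S : (Fin d → Fin n) → F) (hS : S ∈ oddPartitionSimple) :
    kNull 2 S := by
  obtain ⟨B, T₁, T₂, hB, h0, -, -, hT₁, hT₂, rfl⟩ := hS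
  intro e _
  exact hdet_mul_eq_zero_of_odd_card hB h0 (hT₁.subT e) (hT₂.subT e)
end

section
/- Nonzero hyperdeterminant forces full odd partition rank: for T ∈ T^d(n), if the odd partition rank of T is less than n, then det(T) = 0; equivalently det(T) ≠ 0 implies oprank(T) = n, hence rank(T) ≥ n, and for even d the slice rank of T equals n. -/
open Finset

variable {F : Type*}

/-! Expanding `hdet (∑ m < r, c m)` multilinearly gives one mixed hyperdeterminant per map
`f : Fin n → Fin r`; when `r < n` some simple tensor `c m = U ⊗ V` occupies two columns `i ≠ j`.
Right-multiplying the permutations in the odd block `B` by the transposition `(i j)` is then a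
sign-reversing involution preserving each product, so every mixed term vanishes. Slicing along
a coordinate `k ≠ 0` writes any tensor as at most `n` odd-partition simple tensors (the odd block
is `{k}`), and a fully decomposable tensor is itself such a slice; for even `d` a slice along the
coordinate `0` is odd-partition simple as well, the block `{0}ᶜ` being odd. -/

lemma dependsOnlyOn_compl_update {d n : ℕ} (k : Fin d) (v : Fin n) (T : (Fin d → Fin n) → F) :
    DependsOnlyOn {k}ᶜ (fun i => T (Function.update i k v)) := by
  intro i j hij
  dsimp only
  congr 1
  funext ℓ
  by_cases hℓ : ℓ = k
  · simp [hℓ]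
  · simp [hℓ, hij ℓ hℓ]

section Rank
variable [CommRing F] {d n : ℕ}

lemma exists_mem_decomps_le_of_sum {ι : Type*} [Fintype ι] {S : Set ((Fin d → Fin n) → F)}
    {T : (Fin d → Fin n) → F} (c : ι → (Fin d → Fin n) → F)
    (hc : ∀ a, c a ∈ insert 0 S) (hsum : ∑ a, c a = T) :
    ∃ r ≤ Fintype.card ι, r ∈ Decomps S T := by
  classical
  let s : Finset ι := {a | c a ≠ 0}
  refine ⟨#s, card_le_univ s, fun k => c (s.equivFin.symm k), fun k => ?_, ?_⟩
  · exact (hc _).resolve_left (mem_filter.mp (s.equivFin.symm k).2).2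
  · rw [Equiv.sum_comp s.equivFin.symm (fun a : s => c a), sum_coe_sort s c, ← hsum]
    exact sum_filter_ne_zero univ

lemma rankS_le_rankS_of_subset {S S' : Set ((Fin d → Fin n) → F)} {T : (Fin d → Fin n) → F}
    (hS : S ⊆ insert 0 S') (hT : (Decomps S T).Nonempty) :
    rankS S' T ≤ rankS S T := by
  obtain ⟨c, hc, hsum⟩ := Nat.sInf_mem hT
  obtain ⟨r, hr, hmem⟩ := exists_mem_decomps_le_of_sum c (fun a => hS (hc a)) hsum
  exact (Nat.sInf_le hmem).trans (by simpa [rankS] using hr)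

end Rank

section Slices
variable [CommRing F] {d n : ℕ}

lemma sum_single_mul_update (k : Fin d) (T : (Fin d → Fin n) → F) :
    ∑ v, (fun i => (Pi.single v 1 : Fin n → F) (i k) * T (Function.update i k v)) = T := by
  ext i
  simp [Finset.sum_apply, Pi.single_apply]

lemma comp_eval_ne_zero {v : Fin n → F} (hv : v ≠ 0) (k : Fin d) :
    (fun i : Fin d → Fin n => v (i k)) ≠ 0 := by
  obtain ⟨a, ha⟩ := Function.ne_iff.mp hv
  exact fun h => ha (congrFun h fun _ => a)

lemma slice_mem_oddPartitionSimple [NeZero d] {k : Fin d} (hk : k ≠ 0) {v : Fin n → F}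
    {T₁ : (Fin d → Fin n) → F} (hv : v ≠ 0) (hT₁ : T₁ ≠ 0) (hdep : DependsOnlyOn {k}ᶜ T₁) :
    (fun i => v (i k) * T₁ i) ∈ oddPartitionSimple := by
  refine ⟨{k}, T₁, fun i => v (i k), by simp, by simpa [eq_comm] using hk, hT₁,
    comp_eval_ne_zero hv k, by simpa using hdep, fun i j h => ?_, ?_⟩
  · simp [h k (by simp)]
  · ext i
    exact mul_comm _ _

lemma slice_zero_mem_oddPartitionSimple [NeZero d] (hd : Even d) {v : Fin n → F}
    {T₁ : (Fin d → Fin n) → F} (hv : v ≠ 0) (hT₁ : T₁ ≠ 0) (hdep : DependsOnlyOn {0}ᶜ T₁) :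
    (fun i => v (i 0) * T₁ i) ∈ oddPartitionSimple := by
  refine ⟨{0}ᶜ, fun i => v (i 0), T₁, ?_, by simp, comp_eval_ne_zero hv 0, hT₁,
    fun i j h => ?_, by simpa using hdep, rfl⟩
  · rw [card_compl, card_singleton, Fintype.card_fin]
    exact Nat.Even.sub_odd NeZero.one_le hd odd_one
  · simp [h 0 (by simp)]

lemma slice_mem_insert_zero_oddPartitionSimple [NeZero d] {k : Fin d} (hk : k ≠ 0 ∨ Even d)
    {v : Fin n → F} {T₁ : (Fin d → Fin n) → F} (hv : v ≠ 0) (hdep : DependsOnlyOn {k}ᶜ T₁) :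
    (fun i => v (i k) * T₁ i) ∈ insert 0 oddPartitionSimple := by
  obtain rfl | hT₁ := eq_or_ne T₁ 0
  · exact Or.inl (by ext; simp)
  obtain rfl | hk0 := eq_or_ne k 0
  · exact Or.inr <|
      slice_zero_mem_oddPartitionSimple (hk.resolve_left (not_not.2 rfl)) hv hT₁ hdep
  · exact Or.inr (slice_mem_oddPartitionSimple hk0 hv hT₁ hdep)

end Slices

section Decompositions
variable [CommRing F] [Nontrivial F] {d n : ℕ}

lemma exists_mem_decomps_oddPartitionSimple_le [NeZero d] (hd : 2 ≤ d)
    (T : (Fin d → Fin n) → F) :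
    ∃ r ≤ n, r ∈ Decomps oddPartitionSimple T := by
  have hk : (⟨1, hd⟩ : Fin d) ≠ 0 := by simp [Fin.ext_iff]
  simpa using exists_mem_decomps_le_of_sum _
    (fun v => slice_mem_insert_zero_oddPartitionSimple (Or.inl hk)
      (Pi.single_ne_zero_iff.2 one_ne_zero) (dependsOnlyOn_compl_update _ v T))
    (sum_single_mul_update _ T)

lemma n_mem_decomps_sliceSimple [NeZero d] (T : (Fin d → Fin n) → F) :
    n ∈ Decomps sliceSimple T :=
  ⟨_, fun v => ⟨0, _, _, Pi.single_ne_zero_iff.2 one_ne_zero,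
      dependsOnlyOn_compl_update 0 v T, rfl⟩, by simpa using sum_single_mul_update 0 T⟩

lemma single_mem_tensorSimple [NeZero d] (j : Fin d → Fin n) {x : F} (hx : x ≠ 0) :
    Pi.single j x ∈ tensorSimple := by
  classical
  refine ⟨fun ℓ => Pi.single (j ℓ) (if ℓ = 0 then x else 1), fun ℓ => ?_, ?_⟩
  · dsimp only
    split_ifs <;> simp [hx]
  · funext i
    obtain rfl | hij := eq_or_ne i j
    · simp
    · obtain ⟨ℓ, hℓ⟩ := Function.ne_iff.mp hij
      rw [Pi.single_eq_of_ne hij, prod_eq_zero (mem_univ ℓ) (Pi.single_eq_of_ne hℓ _)]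

lemma decomps_tensorSimple_nonempty [NeZero d] (T : (Fin d → Fin n) → F) :
    (Decomps tensorSimple T).Nonempty := by
  classical
  obtain ⟨r, -, hr⟩ := exists_mem_decomps_le_of_sum (fun j => Pi.single j (T j))
    (fun j => (eq_or_ne (T j) 0).elim (fun h => Or.inl (by simp [h]))
      fun h => Or.inr (single_mem_tensorSimple j h)) (univ_sum_single T)
  exact ⟨r, hr⟩

lemma tensorSimple_subset_oddPartitionSimple [NoZeroDivisors F] [NeZero d] (hd : 2 ≤ d) :
    (tensorSimple : Set ((Fin d → Fin n) → F)) ⊆ oddPartitionSimple := by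
  classical
  rintro _ ⟨v, hv, rfl⟩
  set k : Fin d := ⟨1, hd⟩
  have hk : k ≠ 0 := by simp [k, Fin.ext_iff]
  choose a ha using fun ℓ => Function.ne_iff.mp (hv ℓ)
  have hrest : (fun i : Fin d → Fin n => ∏ ℓ ∈ univ.erase k, v ℓ (i ℓ)) ≠ 0 := fun h =>
    prod_ne_zero_iff.mpr (fun ℓ _ => ha ℓ) (congrFun h a)
  have hdep : DependsOnlyOn {k}ᶜ fun i : Fin d → Fin n => ∏ ℓ ∈ univ.erase k, v ℓ (i ℓ) :=
    fun i j h => prod_congr rfl fun ℓ hℓ => by rw [h ℓ (ne_of_mem_erase hℓ)]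
  convert slice_mem_oddPartitionSimple hk (hv k) hrest hdep using 2 with i
  exact (mul_prod_erase _ _ (mem_univ k)).symm

end Decompositions

lemma prod_sign_mul_swap_of_odd {ι α : Type*} [Fintype ι] [DecidableEq ι] [Fintype α]
    [DecidableEq α] {B : Finset ι} (hB : Odd #B) {i j : α} (hij : i ≠ j) (σ : ι → Equiv.Perm α) :
    ∏ ℓ, Equiv.Perm.sign (if ℓ ∈ B then σ ℓ * Equiv.swap i j else σ ℓ) =
      -∏ ℓ, Equiv.Perm.sign (σ ℓ) := by
  have h : ∀ ℓ, Equiv.Perm.sign (if ℓ ∈ B then σ ℓ * Equiv.swap i j else σ ℓ) =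
      Equiv.Perm.sign (σ ℓ) * if ℓ ∈ B then -1 else 1 := by
    intro ℓ
    split_ifs <;> simp [Equiv.Perm.sign_swap hij]
  rw [prod_congr rfl fun ℓ _ => h ℓ, prod_mul_distrib, prod_ite_mem, univ_inter, prod_const,
    hB.neg_one_pow, mul_neg_one]

section Hyperdeterminant
variable [CommRing F] {d n : ℕ}

def mixedHdet [NeZero d] (c : Fin n → (Fin d → Fin n) → F) : F :=
  ∑ σ : Fin d → Equiv.Perm (Fin n),
    if σ 0 = 1 then
      ((((∏ ℓ, Equiv.Perm.sign (σ ℓ)) : ℤˣ) : ℤ) : F) * ∏ i, c i (fun ℓ => σ ℓ i)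
    else 0

lemma hdet_eq_mixedHdet [NeZero d] (T : (Fin d → Fin n) → F) :
    hdet T = mixedHdet fun _ => T :=
  rfl

lemma mixedHdet_sum [NeZero d] {r : ℕ} (c : Fin n → Fin r → (Fin d → Fin n) → F) :
    mixedHdet (fun i => ∑ m, c i m) = ∑ f : Fin n → Fin r, mixedHdet fun i => c i (f i) := by
  unfold mixedHdet
  rw [sum_comm]
  refine sum_congr rfl fun σ _ => ?_
  split_ifs
  · simp only [Finset.sum_apply, Fintype.prod_sum, mul_sum]
  · simp

lemma prod_mul_swap_cols {B : Finset (Fin d)} {U V : (Fin d → Fin n) → F}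
    (hU : DependsOnlyOn ↑Bᶜ U) (hV : DependsOnlyOn ↑B V) {c : Fin n → (Fin d → Fin n) → F}
    {i j : Fin n} (hij : i ≠ j) (hi : c i = fun x => U x * V x) (hj : c j = c i)
    (σ : Fin d → Equiv.Perm (Fin n)) :
    ∏ k, c k (fun ℓ => (if ℓ ∈ B then σ ℓ * Equiv.swap i j else σ ℓ) k) =
      ∏ k, c k (fun ℓ => σ ℓ k) := by
  rw [← prod_mul_prod_compl {i, j}, ← prod_mul_prod_compl {i, j} (fun k => c k _),
    prod_pair hij, prod_pair hij]
  congr 1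
  · have hU' : ∀ k, U (fun ℓ => (if ℓ ∈ B then σ ℓ * Equiv.swap i j else σ ℓ) k) =
        U (fun ℓ => σ ℓ k) := fun k => hU _ _ fun ℓ hℓ => by
      rw [if_neg (by simpa using hℓ)]
    have hV' : ∀ k, V (fun ℓ => (if ℓ ∈ B then σ ℓ * Equiv.swap i j else σ ℓ) k) =
        V (fun ℓ => σ ℓ (Equiv.swap i j k)) := fun k => hV _ _ fun ℓ hℓ => by
      rw [if_pos (by simpa using hℓ), Equiv.Perm.mul_apply]
    rw [hj, hi]
    dsimp only
    rw [hU', hU', hV', hV', Equiv.swap_apply_left, Equiv.swap_apply_right]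
    ring
  · refine prod_congr rfl fun k hk => ?_
    simp only [mem_compl, mem_insert, mem_singleton, not_or] at hk
    congr 1
    funext ℓ
    split_ifs <;> simp [Equiv.swap_apply_of_ne_of_ne hk.1 hk.2]

lemma mixedHdet_eq_zero_of_eq [NeZero d] {c : Fin n → (Fin d → Fin n) → F} {i j : Fin n}
    (hij : i ≠ j) (hci : c i ∈ oddPartitionSimple) (hcj : c j = c i) : mixedHdet c = 0 := by
  obtain ⟨B, U, V, hB, h0B, -, -, hU, hV, hUV⟩ := hci
  -- `σ 0` is untouched since `0 ∉ B`, and `c i = c j = U ⊗ V` makes the product invariant.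
  refine sum_ninvolution (fun σ ℓ => if ℓ ∈ B then σ ℓ * Equiv.swap i j else σ ℓ)
    (fun σ => ?_) (fun σ _ hσ => ?_) (fun _ => mem_univ _) (fun σ => ?_)
  · simp only [if_neg h0B]
    split_ifs
    · rw [prod_sign_mul_swap_of_odd hB hij, prod_mul_swap_cols hU hV hij hUV hcj]
      push_cast
      ring
    · exact add_zero 0
  · obtain ⟨ℓ, hℓ⟩ := card_pos.mp hB.pos
    have := congrFun hσ ℓ
    rw [if_pos hℓ, mul_eq_left, Equiv.swap_eq_one_iff] at this
    exact hij this
  · funext ℓ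
    by_cases hℓ : ℓ ∈ B <;> simp [hℓ, mul_assoc]

lemma hdet_eq_zero_of_mem_decomps [NeZero d] {r : ℕ} (hr : r < n) {T : (Fin d → Fin n) → F}
    (hT : r ∈ Decomps oddPartitionSimple T) : hdet T = 0 := by
  obtain ⟨c, hc, rfl⟩ := hT
  rw [hdet_eq_mixedHdet, mixedHdet_sum fun _ => c]
  refine sum_eq_zero fun f _ => ?_
  obtain ⟨i, j, hij, hf⟩ := Fintype.exists_ne_map_eq_of_card_lt f (by simpa using hr)
  exact mixedHdet_eq_zero_of_eq hij (hc (f i)) (congrArg c hf.symm)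

end Hyperdeterminant

/-- a nonzero hyperdeterminant forces full odd partition rank.
If `oprank(T) < n` then `det(T) = 0`; equivalently `det(T) ≠ 0` implies
`oprank(T) = n`, hence the tensor rank of `T` is at least `n`, and for even `d`
the slice rank of `T` equals `n`. -/
theorem oddPartitionRank_full_of_hdet_ne_zero [Field F] {d n : ℕ} [NeZero d]
    (hd : 2 ≤ d) (T : (Fin d → Fin n) → F) :
    (rankS oddPartitionSimple T < n → hdet T = 0) ∧
    (hdet T ≠ 0 →
      rankS oddPartitionSimple T = n ∧ n ≤ rankS tensorSimple T ∧
        (Even d → rankS sliceSimple T = n)) := by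
  obtain ⟨r, hrn, hr⟩ := exists_mem_decomps_oddPartitionSimple_le hd T
  have hle : rankS oddPartitionSimple T ≤ n := (Nat.sInf_le hr).trans hrn
  have hdet_eq_zero : rankS oddPartitionSimple T < n → hdet T = 0 := fun hlt =>
    hdet_eq_zero_of_mem_decomps hlt (Nat.sInf_mem ⟨r, hr⟩)
  refine ⟨hdet_eq_zero, fun hdet_ne => ?_⟩
  have hrank : rankS oddPartitionSimple T = n :=
    hle.eq_of_not_lt fun hlt => hdet_ne (hdet_eq_zero hlt)
  refine ⟨hrank, ?_, fun hde => ?_⟩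
  · exact hrank.symm.trans_le <| rankS_le_rankS_of_subset
      ((tensorSimple_subset_oddPartitionSimple hd).trans (Set.subset_insert 0 _))
      (decomps_tensorSimple_nonempty T)
  · refine le_antisymm (Nat.sInf_le (n_mem_decomps_sliceSimple T)) <|
      hrank.symm.trans_le <| rankS_le_rankS_of_subset ?_ ⟨n, n_mem_decomps_sliceSimple T⟩
    rintro _ ⟨k, v, T₁, hv, hdep, rfl⟩
    exact slice_mem_insert_zero_oddPartitionSimple (Or.inr hde) hv hdep
end
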